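/- Let Z₁,...,Z_{n+1} be exchangeable and almost surely distinct random variables, and set α* = Q̂_n((1 + 1/n)(α − 1/n)), the empirical (1+1/n)(α−1/n)-quantile of Z₁,...,Z_n. Then α − 1/n ≤ P(Z_{n+1} ≤ α*) ≤ α. -/

import Mathlib

/-!
The event `Z_{n+1} ≤ Q̂_n(β)` says exactly that fewer than `k = ⌈βn⌉` of the first `n` scores lie
strictly below `Z_{n+1}`, i.e. that the rank of `Z_{n+1}` among all `n + 1` scores is below `k`.
By exchangeability every score has the same rank distribution, and since the scores are a.s.
distinct their ranks are a.s. a permutation of `0, …, n`; so the rank of `Z_{n+1}` is uniform and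
the probability is exactly `k / (n + 1)`. For `k = ⌈(n + 1)(α - 1/n)⌉` this lies in `[α - 1/n, α]`.
-/

open MeasureTheory Finset

/-- The empirical `β`-quantile of the sample `Z 0, …, Z (n-1)`: the
`⌈β·n⌉`-th order statistic. -/
noncomputable def empQuantile (n : ℕ) (Z : Fin n → ℝ) (β : ℝ) : ℝ :=
  sInf {x : ℝ | ⌈β * n⌉₊ ≤ (Finset.univ.filter (fun i : Fin n => Z i ≤ x)).card}

-- For `⌈β * n⌉₊ = 0` the defining set is all of `ℝ` and `sInf` returns the junk value `0`.
lemma le_empQuantile_iff {n : ℕ} (W : Fin n → ℝ) {β : ℝ}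
    (hk₁ : 1 ≤ ⌈β * n⌉₊) (hkn : ⌈β * n⌉₊ ≤ n) (t : ℝ) :
    t ≤ empQuantile n W β ↔ #{i | W i < t} < ⌈β * n⌉₊ := by
  have : Nonempty (Fin n) := ⟨⟨0, hk₁.trans hkn⟩⟩
  have hne : {x : ℝ | ⌈β * n⌉₊ ≤ #{i | W i ≤ x}}.Nonempty := by
    obtain ⟨i, -, hi⟩ := exists_max_image univ W univ_nonempty
    refine ⟨W i, ?_⟩
    simpa [filter_true_of_mem fun j _ => hi j (mem_univ j)] using hkn
  have hbdd : BddBelow {x : ℝ | ⌈β * n⌉₊ ≤ #{i | W i ≤ x}} := by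
    obtain ⟨i, -, hi⟩ := exists_min_image univ W univ_nonempty
    refine ⟨W i, fun x hx => ?_⟩
    obtain ⟨j, hj⟩ := card_pos.mp (hk₁.trans hx)
    exact (hi j (mem_univ j)).trans (mem_filter.mp hj).2
  rw [empQuantile, le_csInf_iff hbdd hne]
  constructor
  · intro h
    by_contra! hk
    obtain ⟨i, hi, himax⟩ := exists_max_image _ W (card_pos.mp (hk₁.trans hk))
    have hle : #{j | W j < t} ≤ #{j | W j ≤ W i} :=
      card_le_card fun j hj => mem_filter.mpr ⟨mem_univ j, himax j hj⟩
    exact (h _ (hk.trans hle)).not_gt (mem_filter.mp hi).2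
  · intro h x hx
    by_contra! hxt
    have hle : #{j | W j ≤ x} ≤ #{j | W j < t} :=
      card_le_card fun j hj => mem_filter.mpr ⟨mem_univ j, (mem_filter.mp hj).2.trans_lt hxt⟩
    exact (hx.trans hle).not_gt h

section rank

variable {ι α : Type*} [Fintype ι] [LinearOrder α]

def sampleRank (v : ι → α) (j : ι) : ℕ := #{i | v i < v j}

lemma sampleRank_comp_perm (v : ι → α) (σ : Equiv.Perm ι) (j : ι) :
    sampleRank (v ∘ σ) j = sampleRank v (σ j) :=
  card_equiv σ fun i => by simp

lemma sampleRank_lt_card (v : ι → α) (j : ι) : sampleRank v j < Fintype.card ι :=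
  card_lt_univ_of_notMem (x := j) (by simp)

lemma sampleRank_strictMono {v : ι → α} {i j : ι} (h : v i < v j) :
    sampleRank v i < sampleRank v j :=
  card_lt_card <| ssubset_iff_of_subset (fun k hk => mem_filter.mpr
    ⟨mem_univ k, (mem_filter.mp hk).2.trans h⟩) |>.mpr
    ⟨i, mem_filter.mpr ⟨mem_univ i, h⟩, by simp⟩

lemma sampleRank_injective {v : ι → α} (hv : Function.Injective v) :
    Function.Injective (sampleRank v) := by
  intro i j h
  by_contra hij
  rcases lt_or_gt_of_ne (hv.ne hij) with hlt | hlt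
  · exact (sampleRank_strictMono hlt).ne h
  · exact (sampleRank_strictMono hlt).ne' h

lemma exists_sampleRank_eq {v : ι → α} (hv : Function.Injective v) {r : ℕ}
    (hr : r < Fintype.card ι) : ∃ j, sampleRank v j = r := by
  let f : ι → Fin (Fintype.card ι) := fun j => ⟨sampleRank v j, sampleRank_lt_card v j⟩
  have hf : f.Injective := fun i j h => sampleRank_injective hv (congrArg Fin.val h)
  obtain ⟨j, hj⟩ := ((Fintype.bijective_iff_injective_and_card f).mpr ⟨hf, by simp⟩).2 ⟨r, hr⟩
  exact ⟨j, congrArg Fin.val hj⟩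

lemma sampleRank_last {n : ℕ} (v : Fin (n + 1) → α) :
    sampleRank v (Fin.last n) = #{i : Fin n | v i.castSucc < v (Fin.last n)} := by
  simp only [sampleRank, card_filter, Fin.sum_univ_castSucc, lt_self_iff_false, if_false,
    add_zero]

end rank

lemma measurable_sampleRank {ι : Type*} [Fintype ι] (j : ι) :
    Measurable fun v : ι → ℝ => sampleRank v j := by
  simp only [sampleRank, card_filter]
  exact Finset.measurable_sum _ fun i _ =>
    Measurable.ite (measurableSet_lt (measurable_pi_apply i) (measurable_pi_apply j))
      measurable_const measurable_const

section exchangeable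

variable {Ω ι : Type*} [MeasurableSpace Ω] {P : Measure Ω} [Fintype ι] {X : Ω → ι → ℝ}

lemma measurableSet_sampleRank_eq (hX : Measurable X) (j : ι) (r : ℕ) :
    MeasurableSet {ω | sampleRank (X ω) j = r} :=
  hX (measurable_sampleRank j (measurableSet_singleton r))

lemma measure_sampleRank_perm (hX : Measurable X)
    (hexch : ∀ σ : Equiv.Perm ι, P.map (fun ω => X ω ∘ σ) = P.map X)
    (σ : Equiv.Perm ι) (j : ι) (r : ℕ) :
    P {ω | sampleRank (X ω) (σ j) = r} = P {ω | sampleRank (X ω) j = r} := by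
  have hA : MeasurableSet {v : ι → ℝ | sampleRank v j = r} :=
    measurable_sampleRank j (measurableSet_singleton r)
  have hXσ : Measurable fun ω => X ω ∘ σ :=
    measurable_pi_lambda _ fun i => (measurable_pi_apply (σ i)).comp hX
  have := congrArg (· {v | sampleRank v j = r}) (hexch σ)
  simpa only [Measure.map_apply hXσ hA, Measure.map_apply hX hA, Set.preimage_ofPred_eq,
    sampleRank_comp_perm] using this

lemma sum_measure_sampleRank_eq_one [IsProbabilityMeasure P] (hX : Measurable X)
    (hinj : ∀ᵐ ω ∂P, Function.Injective (X ω)) {r : ℕ} (hr : r < Fintype.card ι) :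
    ∑ j, P {ω | sampleRank (X ω) j = r} = 1 := by
  have hnull : P {ω | ¬ Function.Injective (X ω)} = 0 := ae_iff.mp hinj
  have hdisj : Pairwise (Function.onFun (AEDisjoint P) fun j => {ω | sampleRank (X ω) j = r}) :=
    fun i j hij => measure_mono_null
      (fun ω hω hinj => hij (sampleRank_injective hinj (hω.1.trans hω.2.symm))) hnull
  have hcover : P (⋃ j, {ω | sampleRank (X ω) j = r}) = 1 := by
    rw [← measure_univ (μ := P)]
    refine measure_congr (ae_eq_univ.mpr (measure_mono_null (fun ω hω => ?_) hnull))
    exact fun hinj => hω (Set.mem_iUnion.mpr (exists_sampleRank_eq hinj hr))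
  rw [← hcover, measure_iUnion₀ hdisj fun j =>
    (measurableSet_sampleRank_eq hX j r).nullMeasurableSet, tsum_fintype]

lemma measure_sampleRank_eq [IsProbabilityMeasure P] (hX : Measurable X)
    (hexch : ∀ σ : Equiv.Perm ι, P.map (fun ω => X ω ∘ σ) = P.map X)
    (hinj : ∀ᵐ ω ∂P, Function.Injective (X ω)) (j : ι) {r : ℕ} (hr : r < Fintype.card ι) :
    P {ω | sampleRank (X ω) j = r} = (Fintype.card ι : ENNReal)⁻¹ := by
  classical
  have hsame : ∀ i, P {ω | sampleRank (X ω) i = r} = P {ω | sampleRank (X ω) j = r} :=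
    fun i => by simpa using measure_sampleRank_perm hX hexch (Equiv.swap j i) j r
  have hsum := sum_measure_sampleRank_eq_one hX hinj hr
  rw [sum_congr rfl fun i _ => hsame i, sum_const, card_univ, nsmul_eq_mul] at hsum
  exact ENNReal.eq_inv_of_mul_eq_one_left (by rwa [mul_comm])

lemma measure_sampleRank_lt [IsProbabilityMeasure P] (hX : Measurable X)
    (hexch : ∀ σ : Equiv.Perm ι, P.map (fun ω => X ω ∘ σ) = P.map X)
    (hinj : ∀ᵐ ω ∂P, Function.Injective (X ω)) (j : ι) {k : ℕ} (hk : k ≤ Fintype.card ι) :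
    P {ω | sampleRank (X ω) j < k} = k / Fintype.card ι := by
  have hunion : {ω | sampleRank (X ω) j < k} = ⋃ r ∈ range k, {ω | sampleRank (X ω) j = r} := by
    ext ω; simp
  rw [hunion, measure_biUnion_finset (fun r _ r' _ hrr' => Set.disjoint_left.mpr
      fun ω hω hω' => hrr' (hω.symm.trans hω')) fun r _ => measurableSet_sampleRank_eq hX j r,
    sum_congr rfl fun r hr => measure_sampleRank_eq hX hexch hinj j ((mem_range.mp hr).trans_le hk),
    sum_const, card_range, nsmul_eq_mul, div_eq_mul_inv]

end exchangeable

lemma measure_le_empQuantile {Ω : Type*} [MeasurableSpace Ω] {P : Measure Ω}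
    [IsProbabilityMeasure P] {n : ℕ} {X : Ω → Fin (n + 1) → ℝ} (hX : Measurable X)
    (hexch : ∀ σ : Equiv.Perm (Fin (n + 1)), P.map (fun ω => X ω ∘ σ) = P.map X)
    (hinj : ∀ᵐ ω ∂P, Function.Injective (X ω)) {β : ℝ}
    (hk₁ : 1 ≤ ⌈β * n⌉₊) (hkn : ⌈β * n⌉₊ ≤ n) :
    P {ω | X ω (Fin.last n) ≤ empQuantile n (fun i => X ω i.castSucc) β}
      = ⌈β * n⌉₊ / (n + 1) := by
  have hevent : {ω | X ω (Fin.last n) ≤ empQuantile n (fun i => X ω i.castSucc) β}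
      = {ω | sampleRank (X ω) (Fin.last n) < ⌈β * n⌉₊} := by
    ext ω
    simp only [Set.mem_ofPred_eq, le_empQuantile_iff _ hk₁ hkn, sampleRank_last]
  rw [hevent, measure_sampleRank_lt hX hexch hinj _ (by simpa using hkn.trans n.le_succ),
    Fintype.card_fin]
  push_cast
  rfl

lemma natCeil_succ_mul_sub_inv_lt {n : ℕ} (hn : 0 < n) {α : ℝ} (hα : 1 / n < α) :
    (⌈(n + 1) * (α - 1 / n)⌉₊ : ℝ) < (n + 1) * α := by
  have hn' : (0 : ℝ) < n := Nat.cast_pos.mpr hn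
  calc (⌈(n + 1) * (α - 1 / n)⌉₊ : ℝ) < (n + 1) * (α - 1 / n) + 1 :=
        Nat.ceil_lt_add_one (by nlinarith)
    _ = (n + 1) * α - 1 / n := by field_simp; ring
    _ < (n + 1) * α := by linarith [one_div_pos.mpr hn']

/-- **FWER of the tuned (adaptive-alpha) procedure.**
If `Z 0, …, Z n` are exchangeable and a.s. distinct, and
`α* = Q̂_n((1+1/n)(α−1/n))` is the empirical `(1+1/n)(α−1/n)`-quantile of
`Z 1, …, Z n`, then `α − 1/n ≤ P(Z_{n+1} ≤ α*) ≤ α`. -/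
theorem tuned_procedure_FWER_bounds
    {Ω : Type*} [MeasurableSpace Ω] (P : Measure Ω) [IsProbabilityMeasure P]
    (n : ℕ) (hn : 0 < n) (Z : Fin (n + 1) → Ω → ℝ)
    (hZ : ∀ i, Measurable (Z i))
    (hexch : ∀ π : Equiv.Perm (Fin (n + 1)),
      Measure.map (fun ω => fun i => Z (π i) ω) P
        = Measure.map (fun ω => fun i => Z i ω) P)
    (hdist : ∀ᵐ ω ∂P, Function.Injective (fun i => Z i ω))
    (α : ℝ) (hα : α ∈ Set.Ioo (1 / (n : ℝ)) 1) :
    ENNReal.ofReal (α - 1 / n) ≤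
      P {ω | Z (Fin.last n) ω
        ≤ empQuantile n (fun i => Z i.castSucc ω) ((1 + 1 / n) * (α - 1 / n))} ∧
    P {ω | Z (Fin.last n) ω
        ≤ empQuantile n (fun i => Z i.castSucc ω) ((1 + 1 / n) * (α - 1 / n))}
      ≤ ENNReal.ofReal α := by
  obtain ⟨hα₁, hα₂⟩ := hα
  have hn' : (0 : ℝ) < n := Nat.cast_pos.mpr hn
  have hβn : (1 + 1 / n) * (α - 1 / n) * n = (n + 1) * (α - 1 / n) := by field_simp
  have hpos : 0 < (n + 1) * (α - 1 / n) := mul_pos (by positivity) (sub_pos.mpr hα₁)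
  have hk_lt := natCeil_succ_mul_sub_inv_lt hn hα₁
  have hk₁ : 1 ≤ ⌈(n + 1) * (α - 1 / n)⌉₊ := Nat.ceil_pos.mpr hpos
  have hkn : ⌈(n + 1) * (α - 1 / n)⌉₊ ≤ n := by
    have : (⌈(n + 1) * (α - 1 / n)⌉₊ : ℝ) < n + 1 := by nlinarith
    exact Nat.lt_succ_iff.mp (by exact_mod_cast this)
  rw [measure_le_empQuantile (measurable_pi_lambda _ hZ) hexch hdist (hβn ▸ hk₁) (hβn ▸ hkn),
    hβn, ← ENNReal.ofReal_natCast, ← ENNReal.ofReal_natCast n, ← ENNReal.ofReal_one,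
    ← ENNReal.ofReal_add hn'.le zero_le_one, ← ENNReal.ofReal_div_of_pos (by positivity)]
  refine ⟨ENNReal.ofReal_le_ofReal ?_, ENNReal.ofReal_le_ofReal ?_⟩
  · rw [le_div_iff₀ (by positivity)]
    nlinarith [Nat.le_ceil ((n + 1) * (α - 1 / n))]
  · rw [div_le_iff₀ (by positivity)]
    linarith
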